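/- arXiv:2104.10537 — 2 statements merged into one kernel-verified Lean document; each statement's English description precedes it below -/
import Mathlib

section
/- Fix t > 0 and 0 ≤ x₁ < x₂. If τ₁ is any minimizer of τ ↦ G(τ,x₁,t) over [0,∞) and τ₂ is any minimizer of τ ↦ G(τ,x₂,t) over [0,∞), then τ₂ ≤ τ₁. In particular, τ_*(x,t) and τ^*(x,t) are monotonically decreasing in x for fixed t, and τ^*(x₂,t) ≤ τ_*(x₁,t). -/
/-!
Increasing the position `x` adds to `τ ↦ G(τ, x, t)` the term `(x₂ - x₁) ∫₀^τ ρ_b u_b`, which is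
strictly increasing in `τ` because the boundary flux `ρ_b u_b` is positive. Comparing the two
minimality conditions, this increment at `τ₂` is at most its value at `τ₁`, hence `τ₂ ≤ τ₁`.
-/

open MeasureTheory Set Filter

noncomputable def Fpot (ρ0 u0 : ℝ → ℝ) (y x t : ℝ) : ℝ :=
  ∫ η in (0:ℝ)..y, (t * u0 η + η - x) * ρ0 η

noncomputable def Gpot (ρb ub : ℝ → ℝ) (τ x t : ℝ) : ℝ :=
  ∫ η in (0:ℝ)..τ, (x - ub η * (t - η)) * (ρb η * ub η)

/-- `a` minimizes `f` over `[0, ∞)`. -/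
def MinimizesOn (f : ℝ → ℝ) (a : ℝ) : Prop :=
  0 ≤ a ∧ ∀ b, 0 ≤ b → f a ≤ f b

/-- `a` is the smallest minimizer of `f` over `[0, ∞)`. -/
def SmallestMinimizer (f : ℝ → ℝ) (a : ℝ) : Prop :=
  MinimizesOn f a ∧ ∀ b, MinimizesOn f b → a ≤ b

/-- `a` is the largest minimizer of `f` over `[0, ∞)`. -/
def LargestMinimizer (f : ℝ → ℝ) (a : ℝ) : Prop :=
  MinimizesOn f a ∧ ∀ b, MinimizesOn f b → b ≤ a

/-- `v` is the (attained) minimum value of `f` over `[0, ∞)`. -/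
def IsMinValue (f : ℝ → ℝ) (v : ℝ) : Prop :=
  (∃ a, 0 ≤ a ∧ f a = v) ∧ ∀ b, 0 ≤ b → v ≤ f b

def BddOnIccZero (f : ℝ → ℝ) : Prop :=
  ∀ K, ∃ C, ∀ η ∈ Icc 0 K, |f η| ≤ C

namespace BddOnIccZero

variable {f g : ℝ → ℝ}

lemma const (c : ℝ) : BddOnIccZero fun _ => c :=
  fun _ => ⟨|c|, fun _ _ => le_rfl⟩

lemma id : BddOnIccZero fun η => η :=
  fun K => ⟨K, fun _ hη => (abs_of_nonneg hη.1).trans_le hη.2⟩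

lemma sub (hf : BddOnIccZero f) (hg : BddOnIccZero g) : BddOnIccZero fun η => f η - g η := by
  intro K
  obtain ⟨C, hC⟩ := hf K
  obtain ⟨D, hD⟩ := hg K
  exact ⟨C + D, fun η hη => (abs_sub _ _).trans (add_le_add (hC η hη) (hD η hη))⟩

lemma mul (hf : BddOnIccZero f) (hg : BddOnIccZero g) : BddOnIccZero fun η => f η * g η := by
  intro K
  obtain ⟨C, hC⟩ := hf K
  obtain ⟨D, hD⟩ := hg K
  refine ⟨C * D, fun η hη => ?_⟩
  rw [abs_mul]
  exact mul_le_mul (hC η hη) (hD η hη) (abs_nonneg _) ((abs_nonneg _).trans (hC η hη))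

lemma of_pos_of_le (hpos : ∀ η, 0 ≤ η → 0 < f η) (hle : ∀ K, ∃ M, ∀ η ∈ Icc 0 K, f η ≤ M) :
    BddOnIccZero f := by
  intro K
  obtain ⟨M, hM⟩ := hle K
  exact ⟨M, fun η hη => (abs_of_pos (hpos η hη.1)).trans_le (hM η hη)⟩

lemma of_abs_le (h : ∃ M, ∀ η, 0 ≤ η → |f η| ≤ M) : BddOnIccZero f := by
  obtain ⟨M, hM⟩ := h
  exact fun _ => ⟨M, fun η hη => hM η hη.1⟩

lemma intervalIntegrable (hf : BddOnIccZero f) (hm : Measurable f) {a b : ℝ} (ha : 0 ≤ a)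
    (hb : 0 ≤ b) : IntervalIntegrable f volume a b := by
  obtain ⟨C, hC⟩ := hf (max a b)
  have hsub : uIoc a b ⊆ Icc 0 (max a b) :=
    uIoc_subset_uIcc.trans (uIcc_subset_Icc ⟨ha, le_max_left a b⟩ ⟨hb, le_max_right a b⟩)
  rw [intervalIntegrable_iff]
  refine Measure.integrableOn_of_bounded (M := C) measure_Ioc_lt_top.ne hm.aestronglyMeasurable ?_
  filter_upwards [ae_restrict_mem measurableSet_uIoc] with η hη
  exact hC η (hsub hη)

end BddOnIccZero

lemma MinimizesOn.le_of_strictMonoOn_sub {f₁ f₂ : ℝ → ℝ} {τ₁ τ₂ : ℝ}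
    (hmono : StrictMonoOn (fun τ => f₂ τ - f₁ τ) (Ici 0))
    (h₁ : MinimizesOn f₁ τ₁) (h₂ : MinimizesOn f₂ τ₂) : τ₂ ≤ τ₁ := by
  have hle : f₂ τ₂ - f₁ τ₂ ≤ f₂ τ₁ - f₁ τ₁ := by
    linarith [h₁.2 τ₂ h₂.1, h₂.2 τ₁ h₁.1]
  exact (hmono.le_iff_le h₂.1 h₁.1).1 hle

lemma strictMonoOn_integral_of_pos {g : ℝ → ℝ}
    (hint : ∀ b, 0 ≤ b → IntervalIntegrable g volume 0 b) (hpos : ∀ η, 0 < η → 0 < g η) :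
    StrictMonoOn (fun τ => ∫ η in (0:ℝ)..τ, g η) (Ici 0) := by
  intro a ha b hb hab
  have hab_int : IntervalIntegrable g volume a b := (hint a ha).symm.trans (hint b hb)
  have hpos_ab : 0 < ∫ η in a..b, g η :=
    intervalIntegral.intervalIntegral_pos_of_pos_on hab_int
      (fun η hη => hpos η ((mem_Ici.1 ha).trans_lt hη.1)) hab
  show ∫ η in (0:ℝ)..a, g η < ∫ η in (0:ℝ)..b, g η
  rw [← intervalIntegral.integral_add_adjacent_intervals (hint a ha) hab_int]
  exact lt_add_of_pos_right _ hpos_ab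

lemma Gpot_sub_Gpot {ρb ub : ℝ → ℝ} {τ t : ℝ}
    (hint : ∀ x, IntervalIntegrable (fun η => (x - ub η * (t - η)) * (ρb η * ub η)) volume 0 τ)
    (x₁ x₂ : ℝ) :
    Gpot ρb ub τ x₂ t - Gpot ρb ub τ x₁ t = (x₂ - x₁) * ∫ η in (0:ℝ)..τ, ρb η * ub η := by
  rw [Gpot, Gpot, ← intervalIntegral.integral_sub (hint x₂) (hint x₁),
    ← intervalIntegral.integral_const_mul]
  congr 1
  funext η
  ring

theorem stmt1_general
    (ρb ub : ℝ → ℝ)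
    (hρbmeas : Measurable ρb) (hubmeas : Measurable ub)
    (hρbpos : ∀ η, 0 ≤ η → 0 < ρb η)
    (hubpos : ∀ η, 0 ≤ η → 0 < ub η)
    (hρbloc : ∀ K : ℝ, ∃ M : ℝ, ∀ η ∈ Set.Icc (0:ℝ) K, ρb η ≤ M)
    (hubbdd : ∃ M : ℝ, ∀ η, 0 ≤ η → |ub η| ≤ M)
    (t x₁ x₂ τ₁ τ₂ : ℝ)
    (hx : x₁ < x₂)
    (hτ₁ : MinimizesOn (fun τ => Gpot ρb ub τ x₁ t) τ₁)
    (hτ₂ : MinimizesOn (fun τ => Gpot ρb ub τ x₂ t) τ₂) :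
    τ₂ ≤ τ₁ := by
  have hub : BddOnIccZero ub := .of_abs_le hubbdd
  have hflux : BddOnIccZero fun η => ρb η * ub η :=
    (BddOnIccZero.of_pos_of_le hρbpos hρbloc).mul hub
  have hflux_int : ∀ b, 0 ≤ b → IntervalIntegrable (fun η => ρb η * ub η) volume 0 b :=
    fun b hb => hflux.intervalIntegrable (hρbmeas.mul hubmeas) le_rfl hb
  have hGpot_int : ∀ b, 0 ≤ b → ∀ x,
      IntervalIntegrable (fun η => (x - ub η * (t - η)) * (ρb η * ub η)) volume 0 b :=
    fun b hb x => (((BddOnIccZero.const x).sub (hub.mul ((BddOnIccZero.const t).sub .id))).mul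
      hflux).intervalIntegrable (by fun_prop) le_rfl hb
  refine hτ₁.le_of_strictMonoOn_sub ?_ hτ₂
  have hmass_mono := strictMonoOn_integral_of_pos hflux_int
    fun η hη => mul_pos (hρbpos η hη.le) (hubpos η hη.le)
  have hincrement_mono : StrictMonoOn (fun τ => (x₂ - x₁) * ∫ η in (0:ℝ)..τ, ρb η * ub η) (Ici 0) :=
    fun a ha b hb hab => mul_lt_mul_of_pos_left (hmass_mono ha hb hab) (sub_pos.2 hx)
  exact hincrement_mono.congr fun τ hτ => (Gpot_sub_Gpot (hGpot_int τ hτ) x₁ x₂).symm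

theorem stmt1
    (ρ0 u0 ρb ub : ℝ → ℝ)
    (hρ0meas : Measurable ρ0) (hu0meas : Measurable u0)
    (hρbmeas : Measurable ρb) (hubmeas : Measurable ub)
    (hρ0pos : ∀ η, 0 ≤ η → 0 < ρ0 η)
    (hρbpos : ∀ η, 0 ≤ η → 0 < ρb η)
    (hubpos : ∀ η, 0 ≤ η → 0 < ub η)
    (hρ0loc : ∀ K : ℝ, ∃ M : ℝ, ∀ η ∈ Set.Icc (0:ℝ) K, ρ0 η ≤ M)
    (hρbloc : ∀ K : ℝ, ∃ M : ℝ, ∀ η ∈ Set.Icc (0:ℝ) K, ρb η ≤ M)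
    (hu0bdd : ∃ M : ℝ, ∀ η, 0 ≤ η → |u0 η| ≤ M)
    (hubbdd : ∃ M : ℝ, ∀ η, 0 ≤ η → |ub η| ≤ M)
    (t x₁ x₂ τ₁ τ₂ : ℝ)
    (ht : 0 < t) (hx₁ : 0 ≤ x₁) (hx : x₁ < x₂)
    (hτ₁ : MinimizesOn (fun τ => Gpot ρb ub τ x₁ t) τ₁)
    (hτ₂ : MinimizesOn (fun τ => Gpot ρb ub τ x₂ t) τ₂) :
    τ₂ ≤ τ₁ :=
  stmt1_general ρb ub hρbmeas hubmeas hρbpos hubpos hρbloc hubbdd t x₁ x₂ τ₁ τ₂ hx hτ₁ hτ₂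
end

section
/- Fix t > 0 and suppose the set I(t) = {x ≥ 0 : F(x,t) = G(x,t)} contains more than one point, say I(t) = [l(t), r(t)] with l(t) < r(t). Then: (1) F(x,t) = G(x,t) = 0 for all x ∈ I(t); (2) τ_*(x,t) = τ^*(x,t) = 0 for all x ∈ (l(t), r(t)], and τ_*(l(t),t) = 0; (3) y_*(x,t) = y^*(x,t) = 0 for all x ∈ [l(t), r(t)), and y_*(r(t),t) = 0. -/
open MeasureTheory Set Filter

/-!
Both potentials vanish at the origin and are affine in `x`, with slopes `-∫₀^y ρ₀` and
`∫₀^τ ρ_b u_b` that are nonzero exactly off the origin. Hence `F(x,t)` is antitone and `G(x,t)`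
monotone in `x`, and a negative minimum value, being attained away from the origin, moves
strictly. So if two points `x₁ < x₂` of `I(t)` had a negative common value at `x₂`, then
`G(x₁,t) < G(x₂,t) = F(x₂,t) ≤ F(x₁,t) = G(x₁,t)`; symmetrically at `x₁`. Once `G(l,t) = 0` is
attained at `τ = 0`, for `x > l` every `τ > 0` gives `G(τ,x,t) > G(τ,l,t) ≥ 0`, so `0` is the
only minimizer; likewise for `F` below `r`.
-/

section MinValue

variable {f g : ℝ → ℝ} {m m' a : ℝ}

theorem IsMinValue.le_of_le (hf : IsMinValue f m) (hg : IsMinValue g m')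
    (hfg : ∀ y, 0 ≤ y → f y ≤ g y) : m ≤ m' := by
  obtain ⟨a, ha, rfl⟩ := hg.1
  exact (hf.2 a ha).trans (hfg a ha)

theorem IsMinValue.lt_of_lt (hf : IsMinValue f m) (hg : IsMinValue g m')
    (hfg : ∀ y, 0 < y → f y < g y) (hg0 : m' < g 0) : m < m' := by
  obtain ⟨a, ha, rfl⟩ := hg.1
  have ha' : 0 < a := ha.lt_of_ne (by rintro rfl; exact lt_irrefl _ hg0)
  exact (hf.2 a ha).trans_lt (hfg a ha')

theorem IsMinValue.minimizesOn_zero (hf : IsMinValue f m) (hm : f 0 ≤ m) : MinimizesOn f 0 :=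
  ⟨le_rfl, fun b hb => hm.trans (hf.2 b hb)⟩

theorem MinimizesOn.eq_zero_of_lt (hf : MinimizesOn f 0) (h0 : f 0 = g 0)
    (hfg : ∀ y, 0 < y → f y < g y) (hg : MinimizesOn g a) : a = 0 := by
  by_contra ha
  have := hfg a (hg.1.lt_of_ne' ha)
  have := hf.2 a hg.1
  have := hg.2 0 le_rfl
  linarith

theorem SmallestMinimizer.eq_zero (ha : SmallestMinimizer f a) (h0 : MinimizesOn f 0) : a = 0 :=
  le_antisymm (ha.2 0 h0) ha.1.1

theorem IsMinValue.eq_zero_of_shared {f₁ f₂ g₁ g₂ : ℝ → ℝ} {m₁ m₂ : ℝ}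
    (hf₁ : IsMinValue f₁ m₁) (hg₁ : IsMinValue g₁ m₁)
    (hf₂ : IsMinValue f₂ m₂) (hg₂ : IsMinValue g₂ m₂)
    (hf : ∀ y, 0 ≤ y → f₂ y ≤ f₁ y) (hg : ∀ y, 0 < y → g₁ y < g₂ y) (hg₂0 : g₂ 0 = 0) :
    m₂ = 0 := by
  have hle : m₂ ≤ 0 := hg₂0 ▸ hg₂.2 0 le_rfl
  by_contra hne
  have := hg₁.lt_of_lt hg₂ hg ((hle.lt_of_ne hne).trans_eq hg₂0.symm)
  have := hf₂.le_of_le hf₁ hf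
  linarith

theorem minValue_eq_zero_of_antitone_of_monotone {P Q : ℝ → ℝ → ℝ} {m : ℝ → ℝ} {l r : ℝ}
    (hlr : l < r) (hPle : ∀ y, 0 ≤ y → Antitone fun x => P x y)
    (hPlt : ∀ y, 0 < y → StrictAnti fun x => P x y) (hQle : ∀ y, 0 ≤ y → Monotone fun x => Q x y)
    (hQlt : ∀ y, 0 < y → StrictMono fun x => Q x y) (hP0 : ∀ x, P x 0 = 0) (hQ0 : ∀ x, Q x 0 = 0)
    (hPm : ∀ x ∈ Icc l r, IsMinValue (P x) (m x)) (hQm : ∀ x ∈ Icc l r, IsMinValue (Q x) (m x)) :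
    ∀ x ∈ Icc l r, m x = 0 := by
  intro x hx
  have hl : l ∈ Icc l r := left_mem_Icc.2 hlr.le
  have hr : r ∈ Icc l r := right_mem_Icc.2 hlr.le
  rcases hx.2.lt_or_eq with hxr | rfl
  · exact (hQm r hr).eq_zero_of_shared (hPm r hr) (hQm x hx) (hPm x hx)
      (fun y hy => hQle y hy hxr.le) (fun y hy => hPlt y hy hxr) (hP0 x)
  · exact (hPm l hl).eq_zero_of_shared (hQm l hl) (hPm x hx) (hQm x hx)
      (fun y hy => hPle y hy hlr.le) (fun y hy => hQlt y hy hlr) (hQ0 x)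

end MinValue

noncomputable def weightedPotential (a w : ℝ → ℝ) (y x : ℝ) : ℝ :=
  ∫ η in (0:ℝ)..y, (x - a η) * w η

section WeightedPotential

variable {a w : ℝ → ℝ} {y : ℝ}

theorem weightedPotential_eq (hw : IntervalIntegrable w volume 0 y)
    (haw : IntervalIntegrable (fun η => a η * w η) volume 0 y) (x : ℝ) :
    weightedPotential a w y x = x * (∫ η in (0:ℝ)..y, w η) - ∫ η in (0:ℝ)..y, a η * w η := by
  rw [← intervalIntegral.integral_const_mul, ← intervalIntegral.integral_sub (hw.const_mul x) haw]
  exact intervalIntegral.integral_congr fun η _ => sub_mul x (a η) (w η)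

theorem weightedPotential_strictMono (hy : 0 < y) (hw : IntervalIntegrable w volume 0 y)
    (haw : IntervalIntegrable (fun η => a η * w η) volume 0 y)
    (hpos : ∀ η ∈ Ioo 0 y, 0 < w η) : StrictMono (weightedPotential a w y) := by
  intro x x' hx
  have hW := intervalIntegral.intervalIntegral_pos_of_pos_on hw hpos hy
  rw [weightedPotential_eq hw haw, weightedPotential_eq hw haw]
  exact sub_lt_sub_right (mul_lt_mul_of_pos_right hx hW) _

theorem weightedPotential_monotone (hy : 0 ≤ y) (hw : IntervalIntegrable w volume 0 y)
    (haw : IntervalIntegrable (fun η => a η * w η) volume 0 y)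
    (hnonneg : ∀ η ∈ Icc 0 y, 0 ≤ w η) : Monotone (weightedPotential a w y) := by
  intro x x' hx
  have hW := intervalIntegral.integral_nonneg (μ := volume) hy hnonneg
  rw [weightedPotential_eq hw haw, weightedPotential_eq hw haw]
  exact sub_le_sub_right (mul_le_mul_of_nonneg_right hx hW) _

end WeightedPotential

theorem intervalIntegrable_of_abs_le {f : ℝ → ℝ} (hf : Measurable f) {y M : ℝ} (hy : 0 ≤ y)
    (hM : ∀ η ∈ Icc 0 y, |f η| ≤ M) : IntervalIntegrable f volume 0 y := by
  rw [intervalIntegrable_iff_integrableOn_Ioc_of_le hy]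
  refine Measure.integrableOn_of_bounded (M := M) measure_Ioc_lt_top.ne hf.aestronglyMeasurable ?_
  filter_upwards [ae_restrict_mem measurableSet_Ioc] with η hη
  exact hM η (Ioc_subset_Icc_self hη)

theorem intervalIntegrable_mul_of_abs_le {f g : ℝ → ℝ} (hf : Measurable f) (hg : Measurable g)
    {y A B : ℝ} (hy : 0 ≤ y) (hA : ∀ η ∈ Icc 0 y, |f η| ≤ A) (hB : ∀ η ∈ Icc 0 y, |g η| ≤ B) :
    IntervalIntegrable (fun η => f η * g η) volume 0 y :=
  intervalIntegrable_of_abs_le (f := fun η => f η * g η) (hf.mul hg) hy fun η hη => by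
    rw [abs_mul]
    exact mul_le_mul (hA η hη) (hB η hη) (abs_nonneg _) ((abs_nonneg _).trans (hA η hη))

theorem Fpot_eq_neg_weightedPotential (ρ0 u0 : ℝ → ℝ) (y x t : ℝ) :
    Fpot ρ0 u0 y x t = -weightedPotential (fun η => t * u0 η + η) ρ0 y x := by
  rw [weightedPotential, ← intervalIntegral.integral_neg]
  exact intervalIntegral.integral_congr fun η _ => by ring

theorem Gpot_eq_weightedPotential (ρb ub : ℝ → ℝ) (τ x t : ℝ) :
    Gpot ρb ub τ x t =
      weightedPotential (fun η => ub η * (t - η)) (fun η => ρb η * ub η) τ x :=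
  rfl

@[simp]
theorem Fpot_zero (ρ0 u0 : ℝ → ℝ) (x t : ℝ) : Fpot ρ0 u0 0 x t = 0 := by
  simp [Fpot]

@[simp]
theorem Gpot_zero (ρb ub : ℝ → ℝ) (x t : ℝ) : Gpot ρb ub 0 x t = 0 := by
  simp [Gpot]

section Initial

variable {ρ0 u0 : ℝ → ℝ}

theorem Fpot_weights_intervalIntegrable (hρ0meas : Measurable ρ0) (hu0meas : Measurable u0)
    (hρ0pos : ∀ η, 0 ≤ η → 0 < ρ0 η) (hρ0loc : ∀ K : ℝ, ∃ M : ℝ, ∀ η ∈ Icc (0:ℝ) K, ρ0 η ≤ M)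
    (hu0bdd : ∃ M : ℝ, ∀ η, 0 ≤ η → |u0 η| ≤ M) (t : ℝ) {y : ℝ} (hy : 0 ≤ y) :
    IntervalIntegrable ρ0 volume 0 y ∧
      IntervalIntegrable (fun η => (t * u0 η + η) * ρ0 η) volume 0 y := by
  obtain ⟨M, hM⟩ := hρ0loc y
  obtain ⟨Mu, hMu⟩ := hu0bdd
  have hρ0M : ∀ η ∈ Icc 0 y, |ρ0 η| ≤ M := fun η hη => by
    rw [abs_of_pos (hρ0pos η hη.1)]
    exact hM η hη
  refine ⟨intervalIntegrable_of_abs_le hρ0meas hy hρ0M,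
    intervalIntegrable_mul_of_abs_le (f := fun η => t * u0 η + η) (A := |t| * Mu + y)
      ((measurable_const.mul hu0meas).add measurable_id) hρ0meas hy (fun η hη => ?_) hρ0M⟩
  calc |t * u0 η + η| ≤ |t| * |u0 η| + |η| := by rw [← abs_mul]; exact abs_add_le _ _
    _ ≤ |t| * Mu + y := by
      rw [abs_of_nonneg hη.1]
      gcongr
      exacts [hMu η hη.1, hη.2]

theorem Fpot_strictAnti (hρ0meas : Measurable ρ0) (hu0meas : Measurable u0)
    (hρ0pos : ∀ η, 0 ≤ η → 0 < ρ0 η) (hρ0loc : ∀ K : ℝ, ∃ M : ℝ, ∀ η ∈ Icc (0:ℝ) K, ρ0 η ≤ M)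
    (hu0bdd : ∃ M : ℝ, ∀ η, 0 ≤ η → |u0 η| ≤ M) (t : ℝ) {y : ℝ} (hy : 0 < y) :
    StrictAnti fun x => Fpot ρ0 u0 y x t := by
  obtain ⟨hw, haw⟩ :=
    Fpot_weights_intervalIntegrable hρ0meas hu0meas hρ0pos hρ0loc hu0bdd t hy.le
  simp_rw [Fpot_eq_neg_weightedPotential]
  exact (weightedPotential_strictMono hy hw haw fun η hη => hρ0pos η hη.1.le).neg

theorem Fpot_antitone (hρ0meas : Measurable ρ0) (hu0meas : Measurable u0)
    (hρ0pos : ∀ η, 0 ≤ η → 0 < ρ0 η) (hρ0loc : ∀ K : ℝ, ∃ M : ℝ, ∀ η ∈ Icc (0:ℝ) K, ρ0 η ≤ M)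
    (hu0bdd : ∃ M : ℝ, ∀ η, 0 ≤ η → |u0 η| ≤ M) (t : ℝ) {y : ℝ} (hy : 0 ≤ y) :
    Antitone fun x => Fpot ρ0 u0 y x t := by
  obtain ⟨hw, haw⟩ := Fpot_weights_intervalIntegrable hρ0meas hu0meas hρ0pos hρ0loc hu0bdd t hy
  simp_rw [Fpot_eq_neg_weightedPotential]
  exact (weightedPotential_monotone hy hw haw fun η hη => (hρ0pos η hη.1).le).neg

end Initial

section Boundary

variable {ρb ub : ℝ → ℝ}

theorem Gpot_weights_intervalIntegrable (hρbmeas : Measurable ρb) (hubmeas : Measurable ub)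
    (hρbpos : ∀ η, 0 ≤ η → 0 < ρb η) (hρbloc : ∀ K : ℝ, ∃ M : ℝ, ∀ η ∈ Icc (0:ℝ) K, ρb η ≤ M)
    (hubbdd : ∃ M : ℝ, ∀ η, 0 ≤ η → |ub η| ≤ M) (t : ℝ) {τ : ℝ} (hτ : 0 ≤ τ) :
    IntervalIntegrable (fun η => ρb η * ub η) volume 0 τ ∧
      IntervalIntegrable (fun η => ub η * (t - η) * (ρb η * ub η)) volume 0 τ := by
  obtain ⟨M, hM⟩ := hρbloc τ
  obtain ⟨Mb, hMb⟩ := hubbdd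
  have hρbM : ∀ η ∈ Icc 0 τ, |ρb η| ≤ M := fun η hη => by
    rw [abs_of_pos (hρbpos η hη.1)]
    exact hM η hη
  have hubMb : ∀ η ∈ Icc 0 τ, |ub η| ≤ Mb := fun η hη => hMb η hη.1
  have hρbub := intervalIntegrable_mul_of_abs_le hρbmeas hubmeas hτ hρbM hubMb
  refine ⟨hρbub, intervalIntegrable_mul_of_abs_le (f := fun η => ub η * (t - η))
    (g := fun η => ρb η * ub η) (A := Mb * (|t| + τ)) (B := M * Mb)
    (hubmeas.mul (measurable_const.sub measurable_id)) (hρbmeas.mul hubmeas) hτ (fun η hη => ?_)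
    fun η hη => ?_⟩
  · rw [abs_mul]
    refine mul_le_mul (hubMb η hη) ?_ (abs_nonneg _) ((abs_nonneg _).trans (hubMb η hη))
    calc |t - η| ≤ |t| + |η| := abs_sub _ _
      _ ≤ |t| + τ := by rw [abs_of_nonneg hη.1]; gcongr; exact hη.2
  · rw [abs_mul]
    exact mul_le_mul (hρbM η hη) (hubMb η hη) (abs_nonneg _) ((abs_nonneg _).trans (hρbM η hη))

theorem Gpot_strictMono (hρbmeas : Measurable ρb) (hubmeas : Measurable ub)
    (hρbpos : ∀ η, 0 ≤ η → 0 < ρb η) (hubpos : ∀ η, 0 ≤ η → 0 < ub η)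
    (hρbloc : ∀ K : ℝ, ∃ M : ℝ, ∀ η ∈ Icc (0:ℝ) K, ρb η ≤ M)
    (hubbdd : ∃ M : ℝ, ∀ η, 0 ≤ η → |ub η| ≤ M) (t : ℝ) {τ : ℝ} (hτ : 0 < τ) :
    StrictMono fun x => Gpot ρb ub τ x t := by
  obtain ⟨hw, haw⟩ :=
    Gpot_weights_intervalIntegrable hρbmeas hubmeas hρbpos hρbloc hubbdd t hτ.le
  simp_rw [Gpot_eq_weightedPotential]
  exact weightedPotential_strictMono hτ hw haw fun η hη =>
    mul_pos (hρbpos η hη.1.le) (hubpos η hη.1.le)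

theorem Gpot_monotone (hρbmeas : Measurable ρb) (hubmeas : Measurable ub)
    (hρbpos : ∀ η, 0 ≤ η → 0 < ρb η) (hubpos : ∀ η, 0 ≤ η → 0 < ub η)
    (hρbloc : ∀ K : ℝ, ∃ M : ℝ, ∀ η ∈ Icc (0:ℝ) K, ρb η ≤ M)
    (hubbdd : ∃ M : ℝ, ∀ η, 0 ≤ η → |ub η| ≤ M) (t : ℝ) {τ : ℝ} (hτ : 0 ≤ τ) :
    Monotone fun x => Gpot ρb ub τ x t := by
  obtain ⟨hw, haw⟩ := Gpot_weights_intervalIntegrable hρbmeas hubmeas hρbpos hρbloc hubbdd t hτ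
  simp_rw [Gpot_eq_weightedPotential]
  exact weightedPotential_monotone hτ hw haw fun η hη =>
    (mul_pos (hρbpos η hη.1) (hubpos η hη.1)).le

end Boundary

theorem stmt7
    (ρ0 u0 ρb ub : ℝ → ℝ)
    (hρ0meas : Measurable ρ0) (hu0meas : Measurable u0)
    (hρbmeas : Measurable ρb) (hubmeas : Measurable ub)
    (hρ0pos : ∀ η, 0 ≤ η → 0 < ρ0 η)
    (hρbpos : ∀ η, 0 ≤ η → 0 < ρb η)
    (hubpos : ∀ η, 0 ≤ η → 0 < ub η)
    (hρ0loc : ∀ K : ℝ, ∃ M : ℝ, ∀ η ∈ Set.Icc (0:ℝ) K, ρ0 η ≤ M)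
    (hρbloc : ∀ K : ℝ, ∃ M : ℝ, ∀ η ∈ Set.Icc (0:ℝ) K, ρb η ≤ M)
    (hu0bdd : ∃ M : ℝ, ∀ η, 0 ≤ η → |u0 η| ≤ M)
    (hubbdd : ∃ M : ℝ, ∀ η, 0 ≤ η → |ub η| ≤ M)
    (Fm Gm : ℝ → ℝ → ℝ)
    (hFm : ∀ x t, 0 ≤ x → 0 ≤ t → IsMinValue (fun y => Fpot ρ0 u0 y x t) (Fm x t))
    (hGm : ∀ x t, 0 ≤ x → 0 ≤ t → IsMinValue (fun τ => Gpot ρb ub τ x t) (Gm x t))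
    (ys yS τs τS : ℝ → ℝ → ℝ)
    (hys : ∀ x t, 0 ≤ x → 0 ≤ t → SmallestMinimizer (fun y => Fpot ρ0 u0 y x t) (ys x t))
    (hyS : ∀ x t, 0 ≤ x → 0 ≤ t → LargestMinimizer (fun y => Fpot ρ0 u0 y x t) (yS x t))
    (hτs : ∀ x t, 0 ≤ x → 0 ≤ t → SmallestMinimizer (fun τ => Gpot ρb ub τ x t) (τs x t))
    (hτS : ∀ x t, 0 ≤ x → 0 ≤ t → LargestMinimizer (fun τ => Gpot ρb ub τ x t) (τS x t))
    (t l r : ℝ) (ht : 0 < t) (hlr : l < r)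
    (hI : {x : ℝ | 0 ≤ x ∧ Fm x t = Gm x t} = Set.Icc l r) :
    (∀ x ∈ Set.Icc l r, Fm x t = 0 ∧ Gm x t = 0) ∧
    ((∀ x ∈ Set.Ioc l r, τs x t = 0 ∧ τS x t = 0) ∧ τs l t = 0) ∧
    ((∀ x ∈ Set.Ico l r, ys x t = 0 ∧ yS x t = 0) ∧ ys r t = 0) := by
  have hmem : ∀ x ∈ Icc l r, 0 ≤ x ∧ Fm x t = Gm x t := by rw [← hI]; exact fun x hx => hx
  have hFmin x (hx : x ∈ Icc l r) := hFm x t (hmem x hx).1 ht.le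
  have hGmin x (hx : x ∈ Icc l r) := hGm x t (hmem x hx).1 ht.le
  have hFlt := fun y (hy : 0 < y) => Fpot_strictAnti hρ0meas hu0meas hρ0pos hρ0loc hu0bdd t hy
  have hGlt := fun τ (hτ : 0 < τ) =>
    Gpot_strictMono hρbmeas hubmeas hρbpos hubpos hρbloc hubbdd t hτ
  have hFzero : ∀ x ∈ Icc l r, Fm x t = 0 :=
    minValue_eq_zero_of_antitone_of_monotone (P := fun x y => Fpot ρ0 u0 y x t)
      (Q := fun x τ => Gpot ρb ub τ x t) hlr
      (fun y hy => Fpot_antitone hρ0meas hu0meas hρ0pos hρ0loc hu0bdd t hy) hFlt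
      (fun τ hτ => Gpot_monotone hρbmeas hubmeas hρbpos hubpos hρbloc hubbdd t hτ) hGlt
      (Fpot_zero ρ0 u0 · t) (Gpot_zero ρb ub · t) hFmin fun x hx => (hmem x hx).2 ▸ hGmin x hx
  have hzero : ∀ x ∈ Icc l r, Fm x t = 0 ∧ Gm x t = 0 := fun x hx =>
    ⟨hFzero x hx, (hmem x hx).2 ▸ hFzero x hx⟩
  have hl : l ∈ Icc l r := left_mem_Icc.2 hlr.le
  have hr : r ∈ Icc l r := right_mem_Icc.2 hlr.le
  have hGl : MinimizesOn (fun τ => Gpot ρb ub τ l t) 0 :=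
    (hGmin l hl).minimizesOn_zero (by simp [(hzero l hl).2])
  have hFr : MinimizesOn (fun y => Fpot ρ0 u0 y r t) 0 :=
    (hFmin r hr).minimizesOn_zero (by simp [hFzero r hr])
  refine ⟨hzero, ⟨fun x hx => ?_, (hτs l t (hmem l hl).1 ht.le).eq_zero hGl⟩,
    fun x hx => ?_, (hys r t (hmem r hr).1 ht.le).eq_zero hFr⟩
  · have hx0 := (hmem x (Ioc_subset_Icc_self hx)).1
    have hlt := fun τ (hτ : 0 < τ) => hGlt τ hτ hx.1
    exact ⟨hGl.eq_zero_of_lt (by simp) hlt (hτs x t hx0 ht.le).1,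
      hGl.eq_zero_of_lt (by simp) hlt (hτS x t hx0 ht.le).1⟩
  · have hx0 := (hmem x (Ico_subset_Icc_self hx)).1
    have hlt := fun y (hy : 0 < y) => hFlt y hy hx.2
    exact ⟨hFr.eq_zero_of_lt (by simp) hlt (hys x t hx0 ht.le).1,
      hFr.eq_zero_of_lt (by simp) hlt (hyS x t hx0 ht.le).1⟩
end
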